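/- arXiv:1406.1480 — 4 statements merged into one kernel-verified Lean document; each statement's English description precedes it below -/
import Mathlib

section
/- Let μ be a finite Borel measure on ℝ^d and let f be a non-negative C^m function with compact support, where m = ⌈3d/2⌉. Define the measure ν by dν = f dμ. Then for all s ∈ [0, d], if |μ̂(ξ)| ≤ C|ξ|^{-s/2} for some constant C and all ξ ≠ 0, then there is a constant C' such that |ν̂(ξ)| ≤ C'|ξ|^{-s/2} for all ξ ≠ 0. -/
/-!
Fourier inversion for `f` and Fubini give `ν̂ = 𝓕 f ⋆ μ̂`. Split this convolution at
`|η| = |ξ| / 2`. Near the origin `|ξ - η| ≥ |ξ| / 2`, so the decay of `μ̂` bounds that part by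
`‖𝓕 f‖₁ C (|ξ| / 2)^(-s/2)`. Far away `|μ̂| ≤ μ(ℝ^d)`, and since `f` is `C^m` with compact support,
`|𝓕 f (η)| ≲ (1 + |η|)^(-m)`; by scaling, the tail of `|η|^(-m)` beyond `R` is `R^(d-m)` times the
tail beyond `1`, and `R^(d-m) ≤ R^(-s/2)` because `m ≥ 3d/2 ≥ d + s/2`.
-/

open MeasureTheory

noncomputable def FT {d : ℕ} (μ : Measure (EuclideanSpace ℝ (Fin d)))
    (ξ : EuclideanSpace ℝ (Fin d)) : ℂ :=
  ∫ x, Complex.exp (-(2 * Real.pi * Complex.I * ((inner ℝ ξ x : ℝ) : ℂ))) ∂μ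

open Metric Module FourierTransform
open scoped Pointwise

theorem norm_integral_mul_le_integral_norm_mul {α 𝕜 : Type*} [MeasurableSpace α] {μ : Measure α}
    [RCLike 𝕜] {g F : α → 𝕜} {B : ℝ} (hg : Integrable g μ) (hF : ∀ᵐ x ∂μ, ‖F x‖ ≤ B) :
    ‖∫ x, g x * F x ∂μ‖ ≤ (∫ x, ‖g x‖ ∂μ) * B := by
  rw [← integral_mul_const]
  refine norm_integral_le_of_norm_le (hg.norm.mul_const B) (hF.mono fun x hx ↦ ?_)
  rw [norm_mul]
  exact mul_le_mul_of_nonneg_left hx (norm_nonneg _)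

theorem exists_norm_le_mul_rpow_neg_of_bounded {E F : Type*} [NormedAddCommGroup E]
    [SeminormedAddCommGroup F] {u : E → F} {a B K r : ℝ} (ha : 0 ≤ a)
    (hB : ∀ ξ, ‖u ξ‖ ≤ B) (hK : ∀ ξ, r ≤ ‖ξ‖ → ‖u ξ‖ ≤ K * ‖ξ‖ ^ (-a)) :
    ∃ C, ∀ ξ ≠ 0, ‖u ξ‖ ≤ C * ‖ξ‖ ^ (-a) := by
  refine ⟨max (B * r ^ a) K, fun ξ hξ ↦ ?_⟩
  have hξ0 : 0 < ‖ξ‖ := norm_pos_iff.2 hξ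
  rcases lt_or_ge ‖ξ‖ r with hsmall | hlarge
  · have hB0 : 0 ≤ B := (norm_nonneg _).trans (hB 0)
    have hone : 1 ≤ r ^ a * ‖ξ‖ ^ (-a) := by
      rw [Real.rpow_neg hξ0.le, ← div_eq_mul_inv, one_le_div (by positivity)]
      exact Real.rpow_le_rpow hξ0.le hsmall.le ha
    calc ‖u ξ‖ ≤ B * (r ^ a * ‖ξ‖ ^ (-a)) := (hB ξ).trans (le_mul_of_one_le_right hB0 hone)
      _ = B * r ^ a * ‖ξ‖ ^ (-a) := by ring
      _ ≤ _ := by gcongr; exact le_max_left _ _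
  · exact (hK ξ hlarge).trans (by gcongr; exact le_max_right _ _)

theorem norm_setIntegral_closedBall_mul_sub_le {E 𝕜 : Type*} [NormedAddCommGroup E]
    [MeasurableSpace E] [OpensMeasurableSpace E] (μ : Measure E) [RCLike 𝕜] {g F : E → 𝕜}
    {a C R : ℝ} (hR : 0 < R) (ha : 0 ≤ a) (hg : Integrable g μ)
    (hF_decay : ∀ x ≠ 0, ‖F x‖ ≤ C * ‖x‖ ^ (-a)) {ξ : E} (hξ : 2 * R ≤ ‖ξ‖) :
    ‖∫ η in closedBall 0 R, g η * F (ξ - η) ∂μ‖ ≤ (∫ η, ‖g η‖ ∂μ) * (C * R ^ (-a)) := by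
  have hξ0 : ξ ≠ 0 := norm_pos_iff.1 (by linarith)
  have hC : 0 ≤ C := nonneg_of_mul_nonneg_left ((norm_nonneg _).trans (hF_decay ξ hξ0))
    (Real.rpow_pos_of_pos (norm_pos_iff.2 hξ0) _)
  refine (norm_integral_mul_le_integral_norm_mul (B := C * R ^ (-a)) hg.restrict ?_).trans ?_
  · refine (ae_restrict_iff' measurableSet_closedBall).2 (.of_forall fun η hη ↦ ?_)
    have hRξη : R ≤ ‖ξ - η‖ := by
      rw [mem_closedBall_zero_iff] at hη
      linarith [norm_sub_norm_le ξ η]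
    refine (hF_decay _ (norm_pos_iff.1 (by linarith))).trans ?_
    exact mul_le_mul_of_nonneg_left
      (Real.rpow_le_rpow_of_nonpos hR hRξη (neg_nonpos.2 ha)) hC
  · exact mul_le_mul_of_nonneg_right (setIntegral_le_integral hg.norm
      (.of_forall fun _ ↦ norm_nonneg _)) (by positivity)

section Decay

variable {E : Type*} [NormedAddCommGroup E] [NormedSpace ℝ E] [FiniteDimensional ℝ E]
  [MeasurableSpace E] [BorelSpace E] (μ : Measure E) [μ.IsAddHaarMeasure]

theorem integral_compl_closedBall_norm_rpow_neg {R : ℝ} (hR : 0 < R) (m : ℝ) :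
    ∫ x in (closedBall (0 : E) R)ᶜ, ‖x‖ ^ (-m) ∂μ =
      R ^ (finrank ℝ E - m) * ∫ x in (closedBall (0 : E) 1)ᶜ, ‖x‖ ^ (-m) ∂μ := by
  have hball : R • (closedBall (0 : E) 1)ᶜ = (closedBall (0 : E) R)ᶜ := by
    ext x
    rw [Set.mem_smul_set_iff_inv_smul_mem₀ hR.ne', Set.mem_compl_iff, Set.mem_compl_iff,
      mem_closedBall_zero_iff, mem_closedBall_zero_iff, norm_smul, norm_inv,
      Real.norm_of_nonneg hR.le, inv_mul_le_iff₀ hR, mul_one]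
  have hscale := Measure.setIntegral_comp_smul_of_pos μ (fun x : E ↦ ‖x‖ ^ (-m))
    (closedBall (0 : E) 1)ᶜ hR
  simp only [norm_smul, Real.norm_of_nonneg hR.le, Real.mul_rpow hR.le (norm_nonneg _),
    integral_const_mul, hball, smul_eq_mul] at hscale
  rw [eq_inv_mul_iff_mul_eq₀ (by positivity), ← Real.rpow_natCast] at hscale
  rw [← hscale, ← mul_assoc, ← Real.rpow_add hR]
  ring_nf

theorem integrableOn_compl_closedBall_one_norm_rpow_neg {m : ℝ} (hm : finrank ℝ E < m) :
    IntegrableOn (fun x : E ↦ ‖x‖ ^ (-m)) (closedBall 0 1)ᶜ μ := by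
  have hm0 : 0 ≤ m := (Nat.cast_nonneg _).trans hm.le
  refine ((integrable_one_add_norm hm).const_mul (2 ^ m)).integrableOn.mono'
    (Measurable.aestronglyMeasurable (by fun_prop)) ?_
  refine (ae_restrict_iff' measurableSet_closedBall.compl).2 (.of_forall fun x hx ↦ ?_)
  rw [Set.mem_compl_iff, mem_closedBall_zero_iff, not_le] at hx
  rw [Real.norm_of_nonneg (by positivity)]
  calc ‖x‖ ^ (-m) = 2 ^ m * (2 * ‖x‖) ^ (-m) := by
        rw [Real.mul_rpow zero_le_two (norm_nonneg _), ← mul_assoc, ← Real.rpow_add two_pos]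
        simp
    _ ≤ 2 ^ m * (1 + ‖x‖) ^ (-m) := by
        have := Real.rpow_le_rpow_of_nonpos (by positivity) (by linarith : 1 + ‖x‖ ≤ 2 * ‖x‖)
          (neg_nonpos.2 hm0)
        gcongr

theorem setIntegral_compl_closedBall_norm_le_of_decay {F : Type*} [NormedAddCommGroup F]
    {g : E → F} {Cg m R : ℝ} (hm : finrank ℝ E < m) (hR : 1 ≤ R) (hg : Integrable g μ)
    (hg_decay : ∀ x, ‖g x‖ ≤ Cg * (1 + ‖x‖) ^ (-m)) :
    ∫ x in (closedBall 0 R)ᶜ, ‖g x‖ ∂μ ≤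
      Cg * (R ^ (finrank ℝ E - m) * ∫ x in (closedBall (0 : E) 1)ᶜ, ‖x‖ ^ (-m) ∂μ) := by
  have hCg : 0 ≤ Cg := by simpa using (norm_nonneg _).trans (hg_decay 0)
  have hm0 : 0 ≤ m := (Nat.cast_nonneg _).trans hm.le
  rw [← integral_compl_closedBall_norm_rpow_neg μ (by linarith), ← integral_const_mul]
  refine setIntegral_mono_on hg.norm.integrableOn
    (((integrableOn_compl_closedBall_one_norm_rpow_neg μ hm).mono_set
      (Set.compl_subset_compl.2 (closedBall_subset_closedBall hR))).const_mul Cg)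
    measurableSet_closedBall.compl fun x hx ↦ (hg_decay x).trans ?_
  rw [Set.mem_compl_iff, mem_closedBall_zero_iff, not_le] at hx
  exact mul_le_mul_of_nonneg_left (Real.rpow_le_rpow_of_nonpos (by linarith) (by linarith)
    (neg_nonpos.2 hm0)) hCg

theorem exists_norm_integral_mul_sub_le_mul_rpow_neg {𝕜 : Type*} [RCLike 𝕜] {g F : E → 𝕜}
    {m a Cg C M : ℝ} (hm : finrank ℝ E < m) (ha : 0 ≤ a) (hma : finrank ℝ E + a ≤ m)
    (hg : Integrable g μ) (hg_decay : ∀ x, ‖g x‖ ≤ Cg * (1 + ‖x‖) ^ (-m))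
    (hF : Continuous F) (hF_le : ∀ x, ‖F x‖ ≤ M) (hF_decay : ∀ x ≠ 0, ‖F x‖ ≤ C * ‖x‖ ^ (-a)) :
    ∃ C', ∀ ξ ≠ 0, ‖∫ η, g η * F (ξ - η) ∂μ‖ ≤ C' * ‖ξ‖ ^ (-a) := by
  set T := ∫ x in (closedBall (0 : E) 1)ᶜ, ‖x‖ ^ (-m) ∂μ
  have hT : 0 ≤ T := setIntegral_nonneg measurableSet_closedBall.compl
    fun x _ ↦ Real.rpow_nonneg (norm_nonneg x) _
  have hM : 0 ≤ M := (norm_nonneg _).trans (hF_le 0)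
  have hCg : 0 ≤ Cg := by simpa using (norm_nonneg _).trans (hg_decay 0)
  refine exists_norm_le_mul_rpow_neg_of_bounded (r := 2) ha
    (B := (∫ η, ‖g η‖ ∂μ) * M) (K := ((∫ η, ‖g η‖ ∂μ) * C + M * (Cg * T)) * 2 ^ a)
    (fun ξ ↦ norm_integral_mul_le_integral_norm_mul hg (.of_forall fun η ↦ hF_le _))
    (fun ξ hξ ↦ ?_)
  set R := ‖ξ‖ / 2
  have hR : 1 ≤ R := by simp only [R]; linarith
  have hnear := norm_setIntegral_closedBall_mul_sub_le μ (by linarith) ha hg hF_decay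
    (by simp only [R]; linarith : 2 * R ≤ ‖ξ‖)
  have hfar : ‖∫ η in (closedBall 0 R)ᶜ, g η * F (ξ - η) ∂μ‖ ≤ M * (Cg * T) * R ^ (-a) := by
    refine (norm_integral_mul_le_integral_norm_mul hg.restrict
      (.of_forall fun η ↦ hF_le _)).trans ?_
    calc (∫ η in (closedBall 0 R)ᶜ, ‖g η‖ ∂μ) * M ≤ Cg * (R ^ (finrank ℝ E - m) * T) * M :=
          mul_le_mul_of_nonneg_right
            (setIntegral_compl_closedBall_norm_le_of_decay μ hm hR hg hg_decay) hM
      _ ≤ Cg * (R ^ (-a) * T) * M := by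
          gcongr
          linarith
      _ = M * (Cg * T) * R ^ (-a) := by ring
  have hRa : R ^ (-a) = 2 ^ a * ‖ξ‖ ^ (-a) := by
    rw [Real.div_rpow (norm_nonneg _) zero_le_two, Real.rpow_neg zero_le_two, div_inv_eq_mul,
      mul_comm]
  have hint : Integrable (fun η ↦ g η * F (ξ - η)) μ :=
    hg.mul_bdd (hF.comp (continuous_sub_left ξ)).aestronglyMeasurable
      (.of_forall fun η ↦ hF_le _)
  calc ‖∫ η, g η * F (ξ - η) ∂μ‖
      ≤ ‖∫ η in closedBall 0 R, g η * F (ξ - η) ∂μ‖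
          + ‖∫ η in (closedBall 0 R)ᶜ, g η * F (ξ - η) ∂μ‖ := by
        rw [← integral_add_compl measurableSet_closedBall hint]
        exact norm_add_le _ _
    _ ≤ ((∫ η, ‖g η‖ ∂μ) * C + M * (Cg * T)) * R ^ (-a) := by linarith
    _ = _ := by rw [hRa]; ring

end Decay

theorem exists_norm_fourier_le_mul_one_add_norm_rpow_neg {V E : Type*} [NormedAddCommGroup V]
    [InnerProductSpace ℝ V] [FiniteDimensional ℝ V] [MeasurableSpace V] [BorelSpace V]
    [NormedAddCommGroup E] [NormedSpace ℂ E] {f : V → E} {m : ℕ} (hf : ContDiff ℝ m f)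
    (hfc : HasCompactSupport f) :
    ∃ C, ∀ w, ‖𝓕 f w‖ ≤ C * (1 + ‖w‖) ^ (-(m : ℝ)) := by
  have hderiv (k n : ℕ) (_ : (k : ℕ∞) ≤ 0) (hn : (n : ℕ∞) ≤ m) :
      Integrable fun v ↦ ‖v‖ ^ k * ‖iteratedFDeriv ℝ n f v‖ :=
    ((continuous_norm.pow k).mul (hf.continuous_iteratedFDeriv (by exact_mod_cast hn)).norm
      ).integrable_of_hasCompactSupport (hfc.iteratedFDeriv n).norm.mul_left
  have hbound (n : ℕ) (hn : n ≤ m) : ∃ D, ∀ w, ‖w‖ ^ n * ‖𝓕 f w‖ ≤ D := by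
    simp_rw [← norm_iteratedFDeriv_zero (𝕜 := ℝ) (f := 𝓕 f)]
    exact ⟨_, Real.pow_mul_norm_iteratedFDeriv_fourier_le hf hderiv le_rfl (mod_cast hn)⟩
  obtain ⟨D₀, hD₀⟩ := hbound 0 (Nat.zero_le m)
  obtain ⟨Dₘ, hDₘ⟩ := hbound m le_rfl
  refine ⟨2 ^ (m - 1) * (D₀ + Dₘ), fun w ↦ ?_⟩
  have hpos : 0 < (1 + ‖w‖) ^ m := by positivity
  rw [Real.rpow_neg (by positivity), Real.rpow_natCast, ← div_eq_mul_inv, le_div_iff₀ hpos]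
  calc ‖𝓕 f w‖ * (1 + ‖w‖) ^ m ≤ ‖𝓕 f w‖ * (2 ^ (m - 1) * (1 ^ m + ‖w‖ ^ m)) :=
        mul_le_mul_of_nonneg_left (add_pow_le zero_le_one (norm_nonneg w) m) (norm_nonneg _)
    _ = 2 ^ (m - 1) * (‖w‖ ^ 0 * ‖𝓕 f w‖ + ‖w‖ ^ m * ‖𝓕 f w‖) := by ring
    _ ≤ 2 ^ (m - 1) * (D₀ + Dₘ) := by
        gcongr
        exacts [hD₀ w, hDₘ w]

section FourierStieltjes

variable {d : ℕ}

local notation "V" => EuclideanSpace ℝ (Fin d)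

theorem FT_eq_fourierIntegral (μ : Measure V) :
    FT μ = VectorFourier.fourierIntegral Real.fourierChar μ (innerₗ V) fun _ ↦ (1 : ℂ) := by
  ext ξ
  simp only [FT, VectorFourier.fourierIntegral, Circle.smul_def, Real.fourierChar_apply,
    innerₗ_apply_apply, smul_eq_mul, mul_one, real_inner_comm ξ]
  congr 1 with x
  push_cast
  ring_nf

theorem continuous_FT (μ : Measure V) [IsFiniteMeasure μ] : Continuous (FT μ) := by
  rw [FT_eq_fourierIntegral]
  exact VectorFourier.fourierIntegral_continuous Real.continuous_fourierChar continuous_inner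
    (integrable_const 1)

theorem norm_FT_le (μ : Measure V) (ξ : V) : ‖FT μ ξ‖ ≤ μ.real Set.univ := by
  rw [FT_eq_fourierIntegral]
  simpa using VectorFourier.norm_fourierIntegral_le_integral_norm _ μ _ (fun _ ↦ (1 : ℂ)) ξ

theorem FT_withDensity_ofReal (μ : Measure V) {f : V → ℝ} (hf : Measurable f)
    (hf0 : ∀ x, 0 ≤ f x) (ξ : V) :
    FT (μ.withDensity fun x ↦ ENNReal.ofReal (f x)) ξ =
      ∫ x, (f x : ℂ) * Complex.exp (-(2 * Real.pi * Complex.I * ((inner ℝ ξ x : ℝ) : ℂ))) ∂μ := by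
  rw [FT, integral_withDensity_eq_integral_toReal_smul₀ hf.ennreal_ofReal.aemeasurable
    (.of_forall fun _ ↦ ENNReal.ofReal_lt_top)]
  congr 1 with x
  rw [ENNReal.toReal_ofReal (hf0 x), Complex.real_smul]

theorem integral_mul_exp_eq_integral_fourier_mul_FT (μ : Measure V) [IsFiniteMeasure μ]
    {φ : V → ℂ} (hφ : Continuous φ) (hφi : Integrable φ) (h𝓕φ : Integrable (𝓕 φ)) (ξ : V) :
    ∫ x, φ x * Complex.exp (-(2 * Real.pi * Complex.I * ((inner ℝ ξ x : ℝ) : ℂ))) ∂μ =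
      ∫ η, 𝓕 φ η * FT μ (ξ - η) := by
  have hinv (x : V) :
      φ x * Complex.exp (-(2 * Real.pi * Complex.I * ((inner ℝ ξ x : ℝ) : ℂ))) =
        ∫ η, 𝓕 φ η * Complex.exp (-(2 * Real.pi * Complex.I * ((inner ℝ (ξ - η) x : ℝ) : ℂ))) := by
    conv_lhs => rw [← hφ.fourierInv_fourier_eq hφi h𝓕φ]
    rw [Real.fourierInv_eq', ← integral_mul_const]
    congr 1 with η
    rw [smul_eq_mul, mul_comm _ (𝓕 φ η), mul_assoc, ← Complex.exp_add, inner_sub_left]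
    push_cast
    ring_nf
  have hint : Integrable (Function.uncurry fun x η ↦
      𝓕 φ η * Complex.exp (-(2 * Real.pi * Complex.I * ((inner ℝ (ξ - η) x : ℝ) : ℂ))))
      (μ.prod volume) := by
    have hexp : Continuous fun p : V × V ↦
        Complex.exp (-(2 * Real.pi * Complex.I * ((inner ℝ (ξ - p.2) p.1 : ℝ) : ℂ))) := by
      fun_prop
    refine ((integrable_const (1 : ℝ)).mul_prod h𝓕φ.norm).mono'
      (h𝓕φ.aestronglyMeasurable.comp_snd.mul hexp.aestronglyMeasurable) (.of_forall fun p ↦ ?_)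
    simp [Function.uncurry, Complex.norm_exp]
  calc ∫ x, φ x * Complex.exp (-(2 * Real.pi * Complex.I * ((inner ℝ ξ x : ℝ) : ℂ))) ∂μ
      = ∫ x, ∫ η, 𝓕 φ η *
        Complex.exp (-(2 * Real.pi * Complex.I * ((inner ℝ (ξ - η) x : ℝ) : ℂ))) ∂volume ∂μ :=
        integral_congr_ae (.of_forall hinv)
    _ = _ := by
        rw [integral_integral_swap hint]
        simp_rw [integral_const_mul]
        rfl

end FourierStieltjes

theorem stmt0 {d : ℕ} (μ : Measure (EuclideanSpace ℝ (Fin d))) [IsFiniteMeasure μ]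
    (f : EuclideanSpace ℝ (Fin d) → ℝ) (hf0 : ∀ x, 0 ≤ f x)
    (hfc : HasCompactSupport f)
    (hfsm : ContDiff ℝ (Nat.ceil ((3 * d : ℝ) / 2) : ℕ) f)
    (ν : Measure (EuclideanSpace ℝ (Fin d)))
    (hν : ν = μ.withDensity (fun x => ENNReal.ofReal (f x)))
    (s : ℝ) (hs0 : 0 ≤ s) (hsd : s ≤ d)
    (hμ : ∃ C : ℝ, ∀ ξ : EuclideanSpace ℝ (Fin d), ξ ≠ 0 →
      ‖FT μ ξ‖ ≤ C * ‖ξ‖ ^ (-s / 2)) :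
    ∃ C' : ℝ, ∀ ξ : EuclideanSpace ℝ (Fin d), ξ ≠ 0 →
      ‖FT ν ξ‖ ≤ C' * ‖ξ‖ ^ (-s / 2) := by
  rcases Nat.eq_zero_or_pos d with rfl | hd
  · exact ⟨0, fun ξ hξ ↦ absurd (Subsingleton.elim ξ 0) hξ⟩
  set m := ⌈(3 * d : ℝ) / 2⌉₊
  -- `d < m` makes `𝓕 φ` integrable; `d + s / 2 ≤ m` makes its tail small enough.
  have hm : (3 * d : ℝ) / 2 ≤ m := Nat.le_ceil _
  have hd₁ : (1 : ℝ) ≤ d := by exact_mod_cast hd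
  have hdim : (finrank ℝ (EuclideanSpace ℝ (Fin d)) : ℝ) = d := by
    rw [finrank_euclideanSpace_fin]
  set φ : EuclideanSpace ℝ (Fin d) → ℂ := fun x ↦ (f x : ℂ)
  have hφ : ContDiff ℝ m φ := Complex.ofRealCLM.contDiff.comp hfsm
  have hφc : HasCompactSupport φ := hfc.comp_left Complex.ofReal_zero
  have hφi : Integrable φ := hφ.continuous.integrable_of_hasCompactSupport hφc
  obtain ⟨Cg, hCg⟩ := exists_norm_fourier_le_mul_one_add_norm_rpow_neg hφ hφc
  have h𝓕φ : Integrable (𝓕 φ) :=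
    ((integrable_one_add_norm (by linarith : _ < (m : ℝ))).const_mul Cg).mono'
      (VectorFourier.fourierIntegral_continuous Real.continuous_fourierChar continuous_inner
        hφi).aestronglyMeasurable (.of_forall hCg)
  obtain ⟨C, hC⟩ := hμ
  obtain ⟨C', hC'⟩ := exists_norm_integral_mul_sub_le_mul_rpow_neg volume (a := s / 2)
    (by linarith) (by linarith) (by linarith) h𝓕φ hCg (continuous_FT μ) (norm_FT_le μ)
    (by simpa only [neg_div] using hC)
  refine ⟨C', fun ξ hξ ↦ ?_⟩
  rw [hν, FT_withDensity_ofReal μ hfsm.continuous.measurable hf0,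
    integral_mul_exp_eq_integral_fourier_mul_FT μ hφ.continuous hφi h𝓕φ, neg_div]
  exact hC' ξ hξ
end

section
/- Let μ and ν be finite Borel measures on ℝ^d whose topological supports are compact and disjoint. Then dim_F(μ + ν) = min(dim_F μ, dim_F ν). -/
open MeasureTheory

/-- Fourier dimension of a finite Borel measure on `ℝ^d`. -/
noncomputable def fDim {d : ℕ} (μ : Measure (EuclideanSpace ℝ (Fin d))) : ℝ :=
  sSup {s : ℝ | 0 ≤ s ∧ s ≤ d ∧ ∃ C : ℝ, ∀ ξ : EuclideanSpace ℝ (Fin d), ξ ≠ 0 →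
    ‖FT μ ξ‖ ≤ C * ‖ξ‖ ^ (-s / 2)}

/-- Topological support of a measure. -/
def msupp {d : ℕ} (μ : Measure (EuclideanSpace ℝ (Fin d))) : Set (EuclideanSpace ℝ (Fin d)) :=
  {x | ∀ U : Set (EuclideanSpace ℝ (Fin d)), IsOpen U → x ∈ U → 0 < μ U}

/-!
Fix a Schwartz function `g` with `g = 1` on `supp μ` and `g = 0` on `supp ν` (the supports are
compact and disjoint). Fourier inversion for `g` and Fubini give
`μ̂(ξ) = ∫ (μ + ν)^(ξ - η) ĝ(η) dη`. Since `ĝ` decays faster than any polynomial, splitting this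
integral at `|η| = |ξ| / 2` shows that a bound `|(μ + ν)^(ζ)| ≤ C |ζ|^(-s/2)` passes to `μ̂`, and
symmetrically to `ν̂`. Hence `μ + ν` has Fourier decay of order `s` exactly when both `μ` and `ν`
do, and the supremum of the common exponents is the minimum of the two suprema.
-/

open Set Filter Real FourierTransform Manifold SchwartzMap
open scoped RealInnerProductSpace ContDiff

theorem csSup_inter_eq_min {α : Type*} [ConditionallyCompleteLinearOrder α] [DenselyOrdered α]
    {A B : Set α} {a : α} (hA : A.OrdConnected) (hB : B.OrdConnected) (haA : a ∈ A) (haB : a ∈ B)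
    (hAb : BddAbove A) (hBb : BddAbove B) :
    sSup (A ∩ B) = min (sSup A) (sSup B) := by
  have hne : (A ∩ B).Nonempty := ⟨a, haA, haB⟩
  refine le_antisymm (le_min (csSup_le_csSup hAb hne inter_subset_left)
    (csSup_le_csSup hBb hne inter_subset_right)) (not_lt.mp fun hlt => ?_)
  obtain ⟨x, hx, hxA, hxB⟩ : ∃ x, sSup (A ∩ B) < x ∧ x < sSup A ∧ x < sSup B := by
    obtain ⟨x, h₁, h₂⟩ := exists_between hlt
    exact ⟨x, h₁, lt_min_iff.mp h₂⟩
  obtain ⟨y, hy, hxy⟩ := exists_lt_of_lt_csSup ⟨a, haA⟩ hxA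
  obtain ⟨z, hz, hxz⟩ := exists_lt_of_lt_csSup ⟨a, haB⟩ hxB
  have hax : a ≤ x := (le_csSup (hAb.mono inter_subset_left) ⟨haA, haB⟩).trans hx.le
  exact hx.not_ge (le_csSup (hAb.mono inter_subset_left)
    ⟨hA.out haA hy ⟨hax, hxy.le⟩, hB.out haB hz ⟨hax, hxz.le⟩⟩)

theorem exists_schwartzMap_eqOn_one_eqOn_zero {E : Type*} [NormedAddCommGroup E]
    [NormedSpace ℝ E] [FiniteDimensional ℝ E] {K L : Set E} (hK : IsCompact K) (hL : IsClosed L)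
    (hKL : Disjoint K L) :
    ∃ g : 𝓢(E, ℂ), EqOn g 1 K ∧ EqOn g 0 L := by
  obtain ⟨N, hN, hKN, hNL⟩ := exists_compact_between hK hL.isOpen_compl hKL.subset_compl_right
  obtain ⟨φ, hφ0, hφ1, -⟩ := exists_contMDiffMap_zero_one_of_isClosed (n := ⊤) 𝓘(ℝ, E)
    isOpen_interior.isClosed_compl hK.isClosed (disjoint_compl_left_iff_subset.mpr hKN)
  have hφ : ContDiff ℝ ∞ (fun x => (φ x : ℂ)) :=
    Complex.ofRealCLM.contDiff.comp (contMDiff_iff_contDiff.mp φ.contMDiff)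
  have hφc : HasCompactSupport (fun x => (φ x : ℂ)) :=
    .intro hN fun x hx => by simp [hφ0 fun h => hx (interior_subset h)]
  refine ⟨hφc.toSchwartzMap hφ, fun x hx => by simp [hφ1 hx], fun x hx => ?_⟩
  simp [hφ0 fun h => hNL (interior_subset h) hx]

section FourierTransformOfMeasure

variable {d : ℕ}

theorem FT_eq_integral_fourierChar (σ : Measure (EuclideanSpace ℝ (Fin d)))
    (ξ : EuclideanSpace ℝ (Fin d)) : FT σ ξ = ∫ x, (𝐞 (-⟪x, ξ⟫) : ℂ) ∂σ := by
  simp only [FT, fourierChar_apply, real_inner_comm ξ]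
  congr 1 with x
  push_cast
  ring_nf

theorem integrable_fourierChar_mul {σ : Measure (EuclideanSpace ℝ (Fin d))}
    {g : EuclideanSpace ℝ (Fin d) → ℂ} (hg : Integrable g σ) (ξ : EuclideanSpace ℝ (Fin d)) :
    Integrable (fun x => (𝐞 (-⟪x, ξ⟫) : ℂ) * g x) σ :=
  hg.bdd_mul (c := 1) (by fun_prop) (.of_forall fun x => (Circle.norm_coe _).le)

theorem norm_FT_le_s6 (σ : Measure (EuclideanSpace ℝ (Fin d))) [IsFiniteMeasure σ]
    (ξ : EuclideanSpace ℝ (Fin d)) : ‖FT σ ξ‖ ≤ σ.real univ := by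
  rw [FT_eq_integral_fourierChar]
  simpa using norm_integral_le_of_norm_le_const (μ := σ) (C := 1)
    (.of_forall fun x => (Circle.norm_coe _).le)

theorem FT_add_measure (μ ν : Measure (EuclideanSpace ℝ (Fin d))) [IsFiniteMeasure μ]
    [IsFiniteMeasure ν] (ξ : EuclideanSpace ℝ (Fin d)) :
    FT (μ + ν) ξ = FT μ ξ + FT ν ξ := by
  simp only [FT_eq_integral_fourierChar]
  exact integral_add_measure (by simpa using integrable_fourierChar_mul (integrable_const 1) ξ)
    (by simpa using integrable_fourierChar_mul (integrable_const 1) ξ)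

theorem ae_mem_msupp (μ : Measure (EuclideanSpace ℝ (Fin d))) : ∀ᵐ x ∂μ, x ∈ msupp μ := by
  refine measure_null_of_locally_null _ fun x hx => ?_
  obtain ⟨U, hU, hxU, hU0⟩ : ∃ U, IsOpen U ∧ x ∈ U ∧ μ U = 0 := by
    simpa [msupp] using hx
  exact ⟨U, mem_nhdsWithin_of_mem_nhds (hU.mem_nhds hxU), hU0⟩

theorem FT_eq_integral_fourierChar_mul_of_eqOn {μ ν : Measure (EuclideanSpace ℝ (Fin d))}
    {g : EuclideanSpace ℝ (Fin d) → ℂ} (hg : Integrable g (μ + ν)) (hμ : EqOn g 1 (msupp μ))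
    (hν : EqOn g 0 (msupp ν)) (ξ : EuclideanSpace ℝ (Fin d)) :
    FT μ ξ = ∫ x, (𝐞 (-⟪x, ξ⟫) : ℂ) * g x ∂(μ + ν) := by
  obtain ⟨hgμ, hgν⟩ := integrable_add_measure.mp hg
  rw [integral_add_measure (integrable_fourierChar_mul hgμ ξ) (integrable_fourierChar_mul hgν ξ),
    FT_eq_integral_fourierChar]
  have hμ' : ∫ x, (𝐞 (-⟪x, ξ⟫) : ℂ) * g x ∂μ = ∫ x, (𝐞 (-⟪x, ξ⟫) : ℂ) ∂μ :=
    integral_congr_ae <| (ae_mem_msupp μ).mono fun x hx => by simp [hμ hx]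
  have hν' : ∫ x, (𝐞 (-⟪x, ξ⟫) : ℂ) * g x ∂ν = 0 :=
    integral_eq_zero_of_ae <| (ae_mem_msupp ν).mono fun x hx => by simp [hν hx]
  rw [hμ', hν', add_zero]

theorem integral_fourierChar_mul_eq_integral_FT_mul (σ : Measure (EuclideanSpace ℝ (Fin d)))
    [IsFiniteMeasure σ] (g : 𝓢(EuclideanSpace ℝ (Fin d), ℂ)) (ξ : EuclideanSpace ℝ (Fin d)) :
    ∫ x, (𝐞 (-⟪x, ξ⟫) : ℂ) * g x ∂σ = ∫ η, FT σ (ξ - η) * 𝓕 g η := by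
  have hinv : ∀ x, g x = ∫ η, (𝐞 ⟪η, x⟫ : ℂ) * 𝓕 g η := fun x => by
    rw [← g.continuous.fourierInv_fourier_eq g.integrable (𝓕 g).integrable, Real.fourierInv_eq]
    rfl
  have hchar : ∀ x η, (𝐞 (-⟪x, ξ⟫) : ℂ) * 𝐞 ⟪η, x⟫ = 𝐞 (-⟪x, ξ - η⟫) := fun x η => by
    rw [← Circle.coe_mul, ← AddChar.map_add_eq_mul, inner_sub_right, real_inner_comm η]
    ring_nf
  have hprod : Integrable (Function.uncurry fun x η => (𝐞 (-⟪x, ξ⟫) : ℂ) * (𝐞 ⟪η, x⟫ * 𝓕 g η))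
      (σ.prod volume) := by
    refine ((integrable_const (1 : ℝ) (μ := σ)).mul_prod ((𝓕 g).integrable (μ := volume)).norm
      ).mono' (by fun_prop) (.of_forall fun ⟨x, η⟩ => ?_)
    simp only [Function.uncurry_apply_pair, norm_mul, Circle.norm_coe, one_mul, le_refl]
  calc ∫ x, (𝐞 (-⟪x, ξ⟫) : ℂ) * g x ∂σ
      = ∫ x, (∫ η, (𝐞 (-⟪x, ξ⟫) : ℂ) * (𝐞 ⟪η, x⟫ * 𝓕 g η)) ∂σ := by
        simp_rw [hinv, integral_const_mul]
    _ = ∫ η, (∫ x, (𝐞 (-⟪x, ξ⟫) : ℂ) * (𝐞 ⟪η, x⟫ * 𝓕 g η) ∂σ) := integral_integral_swap hprod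
    _ = ∫ η, FT σ (ξ - η) * 𝓕 g η := by
        simp_rw [← mul_assoc, hchar, integral_mul_const, FT_eq_integral_fourierChar]

end FourierTransformOfMeasure

section RpowDecay

variable {E : Type*} [NormedAddCommGroup E] {F : E → ℂ} {a C M : ℝ} {k : ℕ}

theorem one_le_pow_mul_rpow_neg {x y : ℝ} (ha : 0 ≤ a) (hak : a ≤ k) (hx : 1 ≤ x)
    (hxy : x / 2 < y) : 1 ≤ 2 ^ k * y ^ k * (x / 2) ^ (-a) := by
  have hx2 : 0 < x / 2 := by linarith
  rw [rpow_neg hx2.le, ← div_eq_mul_inv, one_le_div (rpow_pos_of_pos hx2 a)]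
  calc (x / 2) ^ a ≤ x ^ a := rpow_le_rpow hx2.le (by linarith) ha
    _ ≤ x ^ (k : ℝ) := rpow_le_rpow_of_exponent_le hx hak
    _ = 2 ^ k * (x / 2) ^ k := by rw [rpow_natCast, ← mul_pow]; ring_nf
    _ ≤ 2 ^ k * y ^ k := by gcongr

theorem norm_apply_sub_le_of_rpow_decay (ha : 0 ≤ a) (hak : a ≤ k) (hC : 0 ≤ C)
    (hM : ∀ ζ, ‖F ζ‖ ≤ M) (hdecay : ∀ ζ, ζ ≠ 0 → ‖F ζ‖ ≤ C * ‖ζ‖ ^ (-a)) {ξ : E}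
    (hξ : 1 ≤ ‖ξ‖) (η : E) :
    ‖F (ξ - η)‖ ≤ (C + M * 2 ^ k * ‖η‖ ^ k) * (‖ξ‖ / 2) ^ (-a) := by
  have hM0 : 0 ≤ M := (norm_nonneg _).trans (hM 0)
  have hξ2 : 0 < ‖ξ‖ / 2 := by linarith
  rcases le_or_gt ‖η‖ (‖ξ‖ / 2) with hη | hη
  · have hsub : ‖ξ‖ / 2 ≤ ‖ξ - η‖ := by linarith [norm_sub_norm_le ξ η]
    calc ‖F (ξ - η)‖ ≤ C * ‖ξ - η‖ ^ (-a) := hdecay _ (norm_pos_iff.mp (hξ2.trans_le hsub))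
      _ ≤ C * (‖ξ‖ / 2) ^ (-a) :=
          mul_le_mul_of_nonneg_left (rpow_le_rpow_of_nonpos hξ2 hsub (by linarith)) hC
      _ ≤ (C + M * 2 ^ k * ‖η‖ ^ k) * (‖ξ‖ / 2) ^ (-a) := by
          gcongr; exact le_add_of_nonneg_right (by positivity)
  · calc ‖F (ξ - η)‖ ≤ M * 1 := by simpa using hM _
      _ ≤ M * (2 ^ k * ‖η‖ ^ k * (‖ξ‖ / 2) ^ (-a)) := by
          gcongr; exact one_le_pow_mul_rpow_neg ha hak hξ hη
      _ ≤ (C + M * 2 ^ k * ‖η‖ ^ k) * (‖ξ‖ / 2) ^ (-a) := by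
          rw [add_mul, ← mul_assoc, ← mul_assoc]
          exact le_add_of_nonneg_left (by positivity)

theorem exists_norm_integral_mul_le_of_rpow_decay [MeasurableSpace E] {μ : Measure E}
    {Ψ : E → ℂ} (ha : 0 ≤ a) (hak : a ≤ k) (hC : 0 ≤ C) (hM : ∀ ζ, ‖F ζ‖ ≤ M)
    (hdecay : ∀ ζ, ζ ≠ 0 → ‖F ζ‖ ≤ C * ‖ζ‖ ^ (-a)) (hΨ : Integrable Ψ μ)
    (hΨk : Integrable (fun η => ‖η‖ ^ k * ‖Ψ η‖) μ) :
    ∃ K, ∀ ξ : E, 1 ≤ ‖ξ‖ → ‖∫ η, F (ξ - η) * Ψ η ∂μ‖ ≤ K * ‖ξ‖ ^ (-a) := by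
  refine ⟨2 ^ a * (C * ∫ η, ‖Ψ η‖ ∂μ + M * 2 ^ k * ∫ η, ‖η‖ ^ k * ‖Ψ η‖ ∂μ), fun ξ hξ => ?_⟩
  have hbound : Integrable (fun η => (C * ‖Ψ η‖ + M * 2 ^ k * (‖η‖ ^ k * ‖Ψ η‖)) *
      (‖ξ‖ / 2) ^ (-a)) μ :=
    ((hΨ.norm.const_mul C).add (hΨk.const_mul _)).mul_const _
  have hhalf : (‖ξ‖ / 2) ^ (-a) = 2 ^ a * ‖ξ‖ ^ (-a) := by
    rw [div_rpow (norm_nonneg ξ) zero_le_two, rpow_neg zero_le_two, div_eq_mul_inv, inv_inv,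
      mul_comm]
  calc ‖∫ η, F (ξ - η) * Ψ η ∂μ‖ ≤ ∫ η, ‖F (ξ - η) * Ψ η‖ ∂μ := norm_integral_le_integral_norm _
    _ ≤ ∫ η, (C * ‖Ψ η‖ + M * 2 ^ k * (‖η‖ ^ k * ‖Ψ η‖)) * (‖ξ‖ / 2) ^ (-a) ∂μ := by
        refine integral_mono_of_nonneg (.of_forall fun η => norm_nonneg _) hbound
          (.of_forall fun η => ?_)
        calc ‖F (ξ - η) * Ψ η‖
            ≤ (C + M * 2 ^ k * ‖η‖ ^ k) * (‖ξ‖ / 2) ^ (-a) * ‖Ψ η‖ := by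
              rw [norm_mul]
              gcongr
              exact norm_apply_sub_le_of_rpow_decay ha hak hC hM hdecay hξ η
          _ = _ := by ring
    _ = 2 ^ a * (C * ∫ η, ‖Ψ η‖ ∂μ + M * 2 ^ k * ∫ η, ‖η‖ ^ k * ‖Ψ η‖ ∂μ) * ‖ξ‖ ^ (-a) := by
        rw [integral_mul_const, integral_add (hΨ.norm.const_mul C) (hΨk.const_mul _),
          integral_const_mul, integral_const_mul, hhalf]
        ring

end RpowDecay

section FourierDecay

variable {d : ℕ}

def HasFourierDecay (μ : Measure (EuclideanSpace ℝ (Fin d))) (s : ℝ) : Prop :=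
  ∃ C : ℝ, ∀ ξ : EuclideanSpace ℝ (Fin d), ξ ≠ 0 → ‖FT μ ξ‖ ≤ C * ‖ξ‖ ^ (-s / 2)

def fourierExponents (μ : Measure (EuclideanSpace ℝ (Fin d))) : Set ℝ :=
  {s | 0 ≤ s ∧ s ≤ d ∧ HasFourierDecay μ s}

theorem fDim_eq_sSup_fourierExponents (μ : Measure (EuclideanSpace ℝ (Fin d))) :
    fDim μ = sSup (fourierExponents μ) :=
  rfl

variable {μ ν : Measure (EuclideanSpace ℝ (Fin d))} {s t : ℝ}

theorem HasFourierDecay.exists_nonneg (h : HasFourierDecay μ s) :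
    ∃ C, 0 ≤ C ∧ ∀ ξ : EuclideanSpace ℝ (Fin d), ξ ≠ 0 → ‖FT μ ξ‖ ≤ C * ‖ξ‖ ^ (-s / 2) :=
  let ⟨C, hC⟩ := h
  ⟨max C 0, le_max_right C 0, fun ξ hξ => (hC ξ hξ).trans (by gcongr; exact le_max_left C 0)⟩

theorem hasFourierDecay_of_one_le_norm [IsFiniteMeasure μ] (hs : 0 ≤ s)
    (h : ∃ C : ℝ, ∀ ξ : EuclideanSpace ℝ (Fin d), 1 ≤ ‖ξ‖ → ‖FT μ ξ‖ ≤ C * ‖ξ‖ ^ (-s / 2)) :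
    HasFourierDecay μ s := by
  obtain ⟨C, hC⟩ := h
  refine ⟨max C (μ.real univ), fun ξ hξ => ?_⟩
  rcases lt_or_ge ‖ξ‖ 1 with hξ1 | hξ1
  · have hone : 1 ≤ ‖ξ‖ ^ (-s / 2) :=
      one_le_rpow_of_pos_of_le_one_of_nonpos (norm_pos_iff.mpr hξ) hξ1.le (by linarith)
    calc ‖FT μ ξ‖ ≤ μ.real univ * 1 := by simpa using norm_FT_le_s6 μ ξ
      _ ≤ max C (μ.real univ) * ‖ξ‖ ^ (-s / 2) := by gcongr; exact le_max_right _ _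
  · exact (hC ξ hξ1).trans (by gcongr; exact le_max_left _ _)

theorem hasFourierDecay_zero [IsFiniteMeasure μ] : HasFourierDecay μ 0 :=
  hasFourierDecay_of_one_le_norm le_rfl ⟨μ.real univ, fun ξ _ => by simpa using norm_FT_le_s6 μ ξ⟩

theorem HasFourierDecay.anti [IsFiniteMeasure μ] (h : HasFourierDecay μ s) (ht : 0 ≤ t)
    (hts : t ≤ s) : HasFourierDecay μ t := by
  obtain ⟨C, hC0, hC⟩ := h.exists_nonneg
  exact hasFourierDecay_of_one_le_norm ht
    ⟨C, fun ξ hξ => (hC ξ (norm_pos_iff.mp (one_pos.trans_le hξ))).trans (by gcongr)⟩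

theorem HasFourierDecay.add_measure [IsFiniteMeasure μ] [IsFiniteMeasure ν]
    (hμ : HasFourierDecay μ s) (hν : HasFourierDecay ν s) : HasFourierDecay (μ + ν) s := by
  obtain ⟨C₁, hC₁⟩ := hμ
  obtain ⟨C₂, hC₂⟩ := hν
  refine ⟨C₁ + C₂, fun ξ hξ => ?_⟩
  calc ‖FT (μ + ν) ξ‖ ≤ ‖FT μ ξ‖ + ‖FT ν ξ‖ := FT_add_measure μ ν ξ ▸ norm_add_le _ _
    _ ≤ (C₁ + C₂) * ‖ξ‖ ^ (-s / 2) := by linarith [hC₁ ξ hξ, hC₂ ξ hξ]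

end FourierDecay

section Disjoint

variable {d : ℕ} {μ ν : Measure (EuclideanSpace ℝ (Fin d))} {s : ℝ}

theorem isClosed_msupp (μ : Measure (EuclideanSpace ℝ (Fin d))) : IsClosed (msupp μ) := by
  refine isOpen_compl_iff.mp (isOpen_iff_forall_mem_open.mpr fun x hx => ?_)
  obtain ⟨U, hU, hxU, hU0⟩ : ∃ U, IsOpen U ∧ x ∈ U ∧ μ U = 0 := by simpa [msupp] using hx
  exact ⟨U, fun y hyU hy => (hy U hU hyU).ne' hU0, hU, hxU⟩

theorem HasFourierDecay.of_add_measure [IsFiniteMeasure μ] [IsFiniteMeasure ν]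
    (h : HasFourierDecay (μ + ν) s) (hs : 0 ≤ s) (hμ : IsCompact (msupp μ))
    (hμν : Disjoint (msupp μ) (msupp ν)) : HasFourierDecay μ s := by
  obtain ⟨C, hC0, hC⟩ := h.exists_nonneg
  obtain ⟨g, hg1, hg0⟩ := exists_schwartzMap_eqOn_one_eqOn_zero hμ (isClosed_msupp ν) hμν
  obtain ⟨k, hk⟩ := exists_nat_ge (s / 2)
  obtain ⟨K, hK⟩ := exists_norm_integral_mul_le_of_rpow_decay (by positivity) hk hC0
    (norm_FT_le_s6 (μ + ν)) (fun ζ hζ => neg_div 2 s ▸ hC ζ hζ) (𝓕 g).integrable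
    ((𝓕 g).integrable_pow_mul volume k)
  refine hasFourierDecay_of_one_le_norm hs ⟨K, fun ξ hξ => ?_⟩
  rw [FT_eq_integral_fourierChar_mul_of_eqOn g.integrable hg1 hg0,
    integral_fourierChar_mul_eq_integral_FT_mul, neg_div]
  exact hK ξ hξ

theorem hasFourierDecay_add_measure_iff [IsFiniteMeasure μ] [IsFiniteMeasure ν] (hs : 0 ≤ s)
    (hμ : IsCompact (msupp μ)) (hν : IsCompact (msupp ν)) (hμν : Disjoint (msupp μ) (msupp ν)) :
    HasFourierDecay (μ + ν) s ↔ HasFourierDecay μ s ∧ HasFourierDecay ν s :=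
  ⟨fun h => ⟨h.of_add_measure hs hμ hμν, (add_comm μ ν ▸ h).of_add_measure hs hν hμν.symm⟩,
    fun h => h.1.add_measure h.2⟩

end Disjoint

section FourierExponents

variable {d : ℕ} {μ ν : Measure (EuclideanSpace ℝ (Fin d))}

theorem zero_mem_fourierExponents [IsFiniteMeasure μ] : 0 ∈ fourierExponents μ :=
  ⟨le_rfl, d.cast_nonneg, hasFourierDecay_zero⟩

theorem bddAbove_fourierExponents : BddAbove (fourierExponents μ) :=
  ⟨d, fun _ hs => hs.2.1⟩

theorem ordConnected_fourierExponents [IsFiniteMeasure μ] : (fourierExponents μ).OrdConnected :=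
  ⟨fun _ hs _ ht _ hu =>
    ⟨hs.1.trans hu.1, hu.2.trans ht.2.1, ht.2.2.anti (hs.1.trans hu.1) hu.2⟩⟩

theorem fourierExponents_add_measure [IsFiniteMeasure μ] [IsFiniteMeasure ν]
    (hμ : IsCompact (msupp μ)) (hν : IsCompact (msupp ν)) (hμν : Disjoint (msupp μ) (msupp ν)) :
    fourierExponents (μ + ν) = fourierExponents μ ∩ fourierExponents ν := by
  ext s
  refine ⟨fun ⟨hs0, hsd, hs⟩ => ?_,
    fun ⟨⟨hs0, hsd, hsμ⟩, _, _, hsν⟩ => ⟨hs0, hsd, hsμ.add_measure hsν⟩⟩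
  obtain ⟨hsμ, hsν⟩ := (hasFourierDecay_add_measure_iff hs0 hμ hν hμν).mp hs
  exact ⟨⟨hs0, hsd, hsμ⟩, hs0, hsd, hsν⟩

end FourierExponents

theorem stmt6 {d : ℕ} (μ ν : Measure (EuclideanSpace ℝ (Fin d)))
    [IsFiniteMeasure μ] [IsFiniteMeasure ν]
    (hμc : IsCompact (msupp μ)) (hνc : IsCompact (msupp ν))
    (hdisj : Disjoint (msupp μ) (msupp ν)) :
    fDim (μ + ν) = min (fDim μ) (fDim ν) := by
  simp only [fDim_eq_sSup_fourierExponents, fourierExponents_add_measure hμc hνc hdisj]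
  exact csSup_inter_eq_min ordConnected_fourierExponents ordConnected_fourierExponents
    zero_mem_fourierExponents zero_mem_fourierExponents bddAbove_fourierExponents
    bddAbove_fourierExponents
end

section
/- The modified Fourier dimension is countably stable: for any countable family {A_k} of Borel subsets of ℝ^d, dim_FM(⋃_k A_k) = sup_k dim_FM A_k. -/
open MeasureTheory

/-- Fourier dimension of a Borel set. -/
noncomputable def fDimSet {d : ℕ} (A : Set (EuclideanSpace ℝ (Fin d))) : ℝ :=
  sSup {r : ℝ | ∃ μ : Measure (EuclideanSpace ℝ (Fin d)),
    IsProbabilityMeasure μ ∧ μ A = 1 ∧ r = fDim μ}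

/-- Modified Fourier dimension of a Borel set. -/
noncomputable def fDimM {d : ℕ} (A : Set (EuclideanSpace ℝ (Fin d))) : ℝ :=
  sSup {r : ℝ | ∃ μ : Measure (EuclideanSpace ℝ (Fin d)),
    IsProbabilityMeasure μ ∧ 0 < μ A ∧ r = fDim μ}

/-! A countable union has positive measure exactly when some member does, so the measures
competing for `fDimM (⋃ k, A k)` are exactly those competing for some `fDimM (A k)`. Both sides
are suprema of subsets of `[0, d]`, where `sSup` commutes with unions. -/

/-- Nonnegativity makes the junk value `sSup ∅ = 0` harmless. -/
theorem Real.sSup_iUnion_of_nonneg {ι : Sort*} {S : ι → Set ℝ}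
    (hS : ∀ i, ∀ x ∈ S i, 0 ≤ x) (hbdd : BddAbove (⋃ i, S i)) :
    sSup (⋃ i, S i) = ⨆ i, sSup (S i) := by
  have hU : ∀ x ∈ ⋃ i, S i, 0 ≤ x := fun x hx => by
    obtain ⟨i, hi⟩ := Set.mem_iUnion.1 hx
    exact hS i x hi
  have hle : ∀ i, sSup (S i) ≤ sSup (⋃ i, S i) := fun i =>
    Real.sSup_le (fun x hx => le_csSup hbdd (Set.mem_iUnion_of_mem i hx)) (Real.sSup_nonneg hU)
  refine le_antisymm ?_ (Real.iSup_le hle (Real.sSup_nonneg hU))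
  refine Real.sSup_le (fun x hx => ?_) (Real.iSup_nonneg fun i => Real.sSup_nonneg (hS i))
  obtain ⟨i, hi⟩ := Set.mem_iUnion.1 hx
  calc x ≤ sSup (S i) := le_csSup (hbdd.mono (Set.subset_iUnion S i)) hi
    _ ≤ ⨆ i, sSup (S i) := le_ciSup ⟨_, Set.forall_mem_range.2 hle⟩ i

theorem MeasureTheory.measure_iUnion_pos_iff {α ι : Type*} [MeasurableSpace α] [Countable ι]
    {μ : Measure α} {s : ι → Set α} : 0 < μ (⋃ i, s i) ↔ ∃ i, 0 < μ (s i) := by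
  simp only [pos_iff_ne_zero, ne_eq, measure_iUnion_null_iff, not_forall]

theorem fDim_nonneg {d : ℕ} (μ : Measure (EuclideanSpace ℝ (Fin d))) : 0 ≤ fDim μ :=
  Real.sSup_nonneg fun _ hs => hs.1

theorem fDim_le {d : ℕ} (μ : Measure (EuclideanSpace ℝ (Fin d))) : fDim μ ≤ d :=
  Real.sSup_le (fun _ hs => hs.2.1) (Nat.cast_nonneg d)

theorem stmt13_general {d : ℕ} (A : ℕ → Set (EuclideanSpace ℝ (Fin d))) :
    fDimM (⋃ k, A k) = ⨆ k, fDimM (A k) := by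
  have hunion : {r : ℝ | ∃ μ : Measure (EuclideanSpace ℝ (Fin d)),
      IsProbabilityMeasure μ ∧ 0 < μ (⋃ k, A k) ∧ r = fDim μ} =
      ⋃ k, {r : ℝ | ∃ μ : Measure (EuclideanSpace ℝ (Fin d)),
        IsProbabilityMeasure μ ∧ 0 < μ (A k) ∧ r = fDim μ} := by
    ext r
    simp only [measure_iUnion_pos_iff, Set.mem_ofPred_eq, Set.mem_iUnion]
    constructor
    · rintro ⟨μ, hμ, ⟨k, hk⟩, rfl⟩
      exact ⟨k, μ, hμ, hk, rfl⟩
    · rintro ⟨k, μ, hμ, hk, rfl⟩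
      exact ⟨μ, hμ, ⟨k, hk⟩, rfl⟩
  rw [fDimM, hunion]
  refine Real.sSup_iUnion_of_nonneg ?_ ⟨d, ?_⟩
  · rintro k _ ⟨μ, -, -, rfl⟩
    exact fDim_nonneg μ
  · rintro _ ⟨-, ⟨k, rfl⟩, μ, -, -, rfl⟩
    exact fDim_le μ

theorem stmt13 {d : ℕ} (A : ℕ → Set (EuclideanSpace ℝ (Fin d)))
    (hA : ∀ k, MeasurableSet (A k)) :
    fDimM (⋃ k, A k) = ⨆ k, fDimM (A k) :=
  stmt13_general A
end

section
/- For any finite Borel measure μ on ℝ^d, lim_{T→∞} (2T)^{-d} ∫_{[-T,T]^d} |μ̂(ξ)|² dξ = Σ_{x ∈ ℝ^d} μ({x})², where the sum is over the (countably many) atoms of μ. -/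
open MeasureTheory

/-!
`|μ̂|²` is the Fourier transform of the finite measure `ν`, the image of `μ ⊗ μ` under
`(x, y) ↦ x - y`. By Fubini, the average of `ν̂` over the cube `[-T, T]^d` is
`∫ ∏ᵢ sinc (2πT zᵢ) dν(z)`; the integrand is bounded by `1` and tends to the indicator of `{0}`,
so by dominated convergence the average tends to `ν {0} = (μ ⊗ μ) (diagonal) = ∑ₓ μ {x}²`.
-/

open Real Filter Topology

theorem abs_sinc_le_inv_abs {x : ℝ} (hx : x ≠ 0) : |sinc x| ≤ |x|⁻¹ := by
  rw [sinc_of_ne_zero hx, abs_div, div_eq_mul_inv]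
  exact mul_le_of_le_one_left (inv_nonneg.2 (abs_nonneg x)) (abs_sin_le_one x)

theorem tendsto_sinc_cocompact : Tendsto sinc (cocompact ℝ) (𝓝 0) := by
  refine squeeze_zero_norm' ?_ (tendsto_inv_atTop_zero.comp tendsto_norm_cocompact_atTop)
  filter_upwards [(hasBasis_cocompact.eventually_iff).2 ⟨{0}, isCompact_singleton, fun x hx => hx⟩]
    with x hx
  exact abs_sinc_le_inv_abs hx

theorem tendsto_sinc_mul_atTop {c : ℝ} (hc : c ≠ 0) :
    Tendsto (fun T => sinc (c * T)) atTop (𝓝 0) := by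
  refine tendsto_sinc_cocompact.comp (tendsto_cocompact_of_tendsto_dist_comp_atTop 0 ?_)
  simp only [dist_zero_right, norm_mul, Real.norm_eq_abs]
  exact (tendsto_abs_atTop_atTop).const_mul_atTop (abs_pos.2 hc)

theorem integral_exp_neg_two_pi_I_mul (T a : ℝ) :
    ∫ t in -T..T, Complex.exp (-(2 * π * Complex.I * (t * a))) = 2 * T * sinc (2 * π * a * T) := by
  rcases eq_or_ne a 0 with rfl | ha
  · simp [two_mul]
  have hc : 2 * π * a ≠ 0 := by positivity
  calc ∫ t in -T..T, Complex.exp (-(2 * π * Complex.I * (t * a)))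
      = ∫ t in -T..T, Complex.exp (((2 * π * a * t : ℝ) : ℂ) * Complex.I) := by
        have h := intervalIntegral.integral_comp_neg (a := -T) (b := T)
          (fun t : ℝ => Complex.exp (((2 * π * a * t : ℝ) : ℂ) * Complex.I))
        rw [neg_neg] at h
        rw [← h]
        congr 1; ext t; congr 1; push_cast; ring
    _ = (2 * π * a)⁻¹ • ∫ t in -(2 * π * a * T)..(2 * π * a * T), Complex.exp (t * Complex.I) := by
        rw [intervalIntegral.integral_comp_mul_left (fun t : ℝ => Complex.exp (t * Complex.I)) hc,
          mul_neg]
    _ = 2 * T * sinc (2 * π * a * T) := by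
        rw [integral_exp_mul_I_eq_sinc, Complex.real_smul]
        have : (a : ℂ) ≠ 0 := Complex.ofReal_ne_zero.2 ha
        push_cast
        field_simp

theorem norm_exp_neg_two_pi_I_mul (r : ℝ) : ‖Complex.exp (-(2 * π * Complex.I * r))‖ = 1 := by
  rw [Complex.norm_exp]
  simp

theorem map_sub_apply_zero {G : Type*} [AddGroup G] [MeasurableSpace G] [MeasurableSub₂ G]
    [MeasurableSingletonClass G] (ν : Measure (G × G)) :
    (ν.map fun p => p.1 - p.2) {0} = ν (Set.diagonal G) := by
  rw [Measure.map_apply measurable_sub (measurableSet_singleton 0)]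
  congr 1
  ext p
  simp [sub_eq_zero, Set.mem_diagonal_iff]

theorem measure_prod_diagonal {α : Type*} [MeasurableSpace α] [MeasurableEq α]
    (μ : Measure α) [SFinite μ] : (μ.prod μ) (Set.diagonal α) = ∑' x, μ {x} ^ 2 := by
  set A := Function.support fun x => μ {x}
  have hA : A.Countable :=
    (Measure.countable_meas_pos_of_disjoint_iUnion (fun x => measurableSet_singleton x)
      fun x y hxy => Set.disjoint_singleton.2 hxy).mono fun x hx => pos_iff_ne_zero.2 hx
  calc (μ.prod μ) (Set.diagonal α) = ∫⁻ x, μ {x} ∂μ := by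
        rw [Measure.prod_apply measurableSet_diagonal]
        congr with x
        congr 1
        ext y
        exact eq_comm
    _ = ∑' x : A, μ {(x : α)} ^ 2 := by
        rw [← setLIntegral_eq_of_support_subset subset_rfl, lintegral_countable _ hA]
        simp_rw [sq]
    _ = ∑' x, μ {x} ^ 2 :=
        tsum_subtype_eq_of_support_subset (f := fun x => μ {x} ^ 2) fun _ hx =>
          ne_zero_pow two_ne_zero hx

theorem measureReal_prod_diagonal {α : Type*} [MeasurableSpace α] [MeasurableEq α]
    (μ : Measure α) [IsFiniteMeasure μ] :
    (μ.prod μ).real (Set.diagonal α) = ∑' x, μ.real {x} ^ 2 := by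
  rw [measureReal_def, measure_prod_diagonal,
    ENNReal.tsum_toReal_eq fun x => ENNReal.pow_ne_top (measure_ne_top μ _)]
  simp_rw [ENNReal.toReal_pow, measureReal_def]

def cube (d : ℕ) (T : ℝ) : Set (EuclideanSpace ℝ (Fin d)) := {ξ | ∀ i, |ξ i| ≤ T}

section

variable {d : ℕ}

noncomputable def cubeKernel (T : ℝ) (z : EuclideanSpace ℝ (Fin d)) : ℝ :=
  ∏ i, sinc (2 * π * z i * T)

theorem toLp_preimage_cube (T : ℝ) :
    WithLp.toLp 2 ⁻¹' cube d T = Set.univ.pi fun _ => Set.Icc (-T) T := by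
  ext y
  simp only [cube, Set.mem_preimage, Set.mem_ofPred_eq, Set.mem_univ_pi, Set.mem_Icc, abs_le]

theorem measurableSet_cube (T : ℝ) : MeasurableSet (cube d T) := by
  rw [cube, Set.ofPred_forall]
  exact .iInter fun i => (isClosed_le (by fun_prop) continuous_const).measurableSet

theorem volume_cube_lt_top (T : ℝ) : volume (cube d T) < ⊤ := by
  rw [← (PiLp.volume_preserving_toLp (Fin d)).measure_preimage
    (measurableSet_cube T).nullMeasurableSet, toLp_preimage_cube, volume_pi_pi]
  simp [Real.volume_Icc]

theorem integral_cube_exp_inner {T : ℝ} (hT : 0 ≤ T) (z : EuclideanSpace ℝ (Fin d)) :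
    ∫ ξ in cube d T, Complex.exp (-(2 * π * Complex.I * inner ℝ ξ z))
      = (2 * T) ^ d * cubeKernel T z := by
  have hprod : ∀ y : Fin d → ℝ, Complex.exp (-(2 * π * Complex.I * inner ℝ (WithLp.toLp 2 y) z))
      = ∏ i, Complex.exp (-(2 * π * Complex.I * (y i * z i))) := by
    intro y
    rw [← Complex.exp_sum, PiLp.inner_apply]
    push_cast
    simp [Finset.mul_sum, mul_comm]
  rw [← (PiLp.volume_preserving_toLp (Fin d)).setIntegral_preimage_emb
    (MeasurableEquiv.toLp 2 _).measurableEmbedding, toLp_preimage_cube, volume_pi,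
    Measure.restrict_pi_pi]
  simp_rw [hprod]
  rw [integral_fintype_prod_eq_prod fun i (t : ℝ) =>
    Complex.exp (-(2 * π * Complex.I * (t * z i)))]
  simp_rw [integral_Icc_eq_integral_Ioc, ← intervalIntegral.integral_of_le (neg_le_self hT),
    integral_exp_neg_two_pi_I_mul, cubeKernel]
  push_cast
  rw [Finset.prod_mul_distrib, Finset.prod_const, Finset.card_univ, Fintype.card_fin]

theorem abs_cubeKernel_le_one (T : ℝ) (z : EuclideanSpace ℝ (Fin d)) : |cubeKernel T z| ≤ 1 := by
  rw [cubeKernel, Finset.abs_prod]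
  exact Finset.prod_le_one (fun _ _ => abs_nonneg _) fun _ _ => abs_sinc_le_one _

theorem continuous_cubeKernel (T : ℝ) : Continuous (cubeKernel (d := d) T) := by
  unfold cubeKernel
  fun_prop

theorem tendsto_cubeKernel (z : EuclideanSpace ℝ (Fin d)) :
    Tendsto (fun T => cubeKernel T z) atTop (𝓝 (({0} : Set _).indicator 1 z)) := by
  have hlim : ∀ i, Tendsto (fun T => sinc (2 * π * z i * T)) atTop
      (𝓝 (if z i = 0 then 1 else 0)) := by
    intro i
    split_ifs with hzi
    · simp [hzi]
    · exact tendsto_sinc_mul_atTop (by positivity)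
  have hval : (∏ i, if z i = 0 then (1 : ℝ) else 0) = ({0} : Set _).indicator 1 z := by
    rw [Finset.prod_boole, Set.indicator_apply]
    simp only [Finset.mem_univ, true_imp_iff, ← WithLp.ofLp_eq_zero, funext_iff, Pi.zero_apply,
      Set.mem_singleton_iff, Pi.one_apply]
  rw [← hval]
  exact tendsto_finsetProd _ fun i _ => hlim i

theorem FT_map_sub_prod (μ : Measure (EuclideanSpace ℝ (Fin d))) [SigmaFinite μ]
    (ξ : EuclideanSpace ℝ (Fin d)) :
    FT ((μ.prod μ).map fun p => p.1 - p.2) ξ = (‖FT μ ξ‖ ^ 2 : ℝ) := by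
  have hexp : ∀ x y : EuclideanSpace ℝ (Fin d),
      Complex.exp (-(2 * π * Complex.I * inner ℝ ξ (x - y)))
        = Complex.exp (-(2 * π * Complex.I * inner ℝ ξ x))
          * starRingEnd ℂ (Complex.exp (-(2 * π * Complex.I * inner ℝ ξ y))) := by
    intro x y
    rw [← Complex.exp_conj, ← Complex.exp_add, inner_sub_right]
    simp only [map_neg, map_mul, map_ofNat, Complex.conj_ofReal, Complex.conj_I]
    push_cast
    ring_nf
  rw [FT, integral_map (by fun_prop) (by fun_prop)]
  simp_rw [hexp]
  rw [integral_prod_mul (fun x => Complex.exp (-(2 * π * Complex.I * inner ℝ ξ x)))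
    fun y => starRingEnd ℂ (Complex.exp (-(2 * π * Complex.I * inner ℝ ξ y))), integral_conj, ← FT,
    Complex.mul_conj, Complex.normSq_eq_norm_sq]

variable (ν : Measure (EuclideanSpace ℝ (Fin d))) [IsFiniteMeasure ν]

theorem tendsto_integral_cubeKernel :
    Tendsto (fun T => ∫ x, cubeKernel T x ∂ν) atTop (𝓝 (ν.real {0})) := by
  rw [← integral_indicator_one (measurableSet_singleton 0)]
  refine tendsto_integral_filter_of_dominated_convergence (fun _ => 1)
    (.of_forall fun T => (continuous_cubeKernel T).aestronglyMeasurable)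
    (.of_forall fun T => .of_forall fun x => abs_cubeKernel_le_one T x)
    (integrable_const 1) (.of_forall tendsto_cubeKernel)

theorem integral_cube_FT {T : ℝ} (hT : 0 ≤ T) :
    ∫ ξ in cube d T, FT ν ξ = (2 * T) ^ d * ∫ x, (cubeKernel T x : ℂ) ∂ν := by
  have : IsFiniteMeasure (volume.restrict (cube d T)) :=
    isFiniteMeasure_restrict.2 (volume_cube_lt_top T).ne
  have hint : Integrable (Function.uncurry fun ξ x =>
      Complex.exp (-(2 * π * Complex.I * inner ℝ ξ x))) ((volume.restrict (cube d T)).prod ν) := by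
    refine .of_bound (by fun_prop) 1 (.of_forall fun p => ?_)
    exact (norm_exp_neg_two_pi_I_mul _).le
  simp_rw [FT, integral_integral_swap hint, integral_cube_exp_inner hT, integral_const_mul]

theorem tendsto_cube_average_FT :
    Tendsto (fun T : ℝ => (1 / (2 * T) ^ d : ℂ) * ∫ ξ in cube d T, FT ν ξ) atTop
      (𝓝 (ν.real {0} : ℂ)) := by
  refine (tendsto_ofReal_iff.2 (tendsto_integral_cubeKernel ν)).congr' ?_
  filter_upwards [eventually_gt_atTop 0] with T hT
  have : (2 * T : ℂ) ^ d ≠ 0 := pow_ne_zero _ (by exact_mod_cast (by positivity : 2 * T ≠ 0))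
  rw [integral_cube_FT ν hT.le, integral_complex_ofReal]
  field_simp

end

theorem stmt16 {d : ℕ} (μ : Measure (EuclideanSpace ℝ (Fin d))) [IsFiniteMeasure μ] :
    Filter.Tendsto
      (fun T : ℝ => (1 / (2 * T) ^ d) *
        ∫ ξ in {ξ : EuclideanSpace ℝ (Fin d) | ∀ i, |ξ i| ≤ T}, ‖FT μ ξ‖ ^ 2)
      Filter.atTop
      (nhds (∑' x : EuclideanSpace ℝ (Fin d), (μ {x}).toReal ^ 2)) := by
  set ν := (μ.prod μ).map fun p => p.1 - p.2
  have hatom : ν.real {0} = ∑' x, μ.real {x} ^ 2 := by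
    rw [measureReal_def, map_sub_apply_zero, ← measureReal_def, measureReal_prod_diagonal]
  rw [← tendsto_ofReal_iff]
  convert tendsto_cube_average_FT ν using 2 with T
  · rw [Complex.ofReal_mul, ← integral_complex_ofReal]
    simp_rw [← FT_map_sub_prod]
    push_cast
    rfl
  · rw [hatom]
    rfl
end
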